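/- arXiv:math/9310207 — 2 statements merged into one kernel-verified Lean document; each statement's English description precedes it below -/
import Mathlib

section
/- Let R be a commutative ring, let C be a group embedded as a subgroup in groups A and B, and let G = A *_C B be the amalgamated free product (pushout in groups). Let P_k be a projective right RA-module, Q_k a projective right RB-module, and N_k a projective right RC-module, and suppose N_k ⊗_{RC} RA is a direct summand of P_k and N_k ⊗_{RC} RB is a direct summand of Q_k. Then the quotient S_k of (P_k ⊗_{RA} RG) ⊕ (Q_k ⊗_{RB} RG) by the submodule generated by all elements ((n ⊗ 1), −(n ⊗ 1)) for n ∈ N_k (via the given summand embeddings) is a projective RG-module. -/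
/-!
Shared infrastructure.  Following standard practice in Mathlib (e.g. `Rep R G`),
we work with *left* modules over the group ring `MonoidAlgebra R G`; for group
rings the categories of left and right modules are equivalent, so this is the
usual formalization of the paper's "right `RA`-modules".
-/

universe u

namespace GP

/-- The augmentation map `RG → R`, sending each group element to `1`. -/
noncomputable def aug (R G : Type u) [CommRing R] [Group G] :
    MonoidAlgebra R G →ₐ[R] R :=
  MonoidAlgebra.lift R R G 1

/-- A projective resolution `⋯ → X n → ⋯ → X 1 → X 0 → R → 0` of the group `G`
over the commutative ring `R`: an exact sequence of projective modules over the
group ring `MonoidAlgebra R G`, with `X 0 = RG` (recorded as the isomorphism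
`iso0`) and augmentation `aug R G` as the map `X 0 → R`. -/
structure Resolution (R : Type u) [CommRing R] (G : Type u) [Group G] :
    Type (u + 1) where
  X : ℕ → Type u
  [acg : ∀ n, AddCommGroup (X n)]
  [modR : ∀ n, Module R (X n)]
  [modG : ∀ n, Module (MonoidAlgebra R G) (X n)]
  [tower : ∀ n, IsScalarTower R (MonoidAlgebra R G) (X n)]
  /-- the boundary maps -/
  d : ∀ n, X (n + 1) →ₗ[MonoidAlgebra R G] X n
  /-- every module in the resolution is projective -/
  projective : ∀ n, Module.Projective (MonoidAlgebra R G) (X n)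
  /-- `X 0` is the group ring itself -/
  iso0 : X 0 ≃ₗ[MonoidAlgebra R G] MonoidAlgebra R G
  /-- exactness at `X (n+1)` -/
  exact_succ : ∀ n, LinearMap.range (d (n + 1)) = LinearMap.ker (d n)
  /-- exactness at `X 0`, the map `X 0 → R` being the augmentation -/
  exact_zero : ∀ x : X 0, aug R G (iso0 x) = 0 ↔ x ∈ LinearMap.range (d 0)

attribute [instance] Resolution.acg Resolution.modR Resolution.modG Resolution.tower

end GP
namespace GP

universe v

section Induced

variable {S T : Type v} [Ring S] [Ring T] (φ : S →+* T)
variable (N : Type v) [AddCommMonoid N] [Module S N]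

/-- The relations defining the induced module `N ⊗_S T` (for left modules,
`T ⊗_S N`): inside the free `T`-module on `N`, additivity in `N` and the
relation `1 ⊗ (s • n) = φ s ⊗ n`. -/
noncomputable def indRels : Submodule T (N →₀ T) :=
  Submodule.span T
    ({x | ∃ n n' : N,
        x = Finsupp.single (n + n') (1 : T) - Finsupp.single n 1 - Finsupp.single n' 1} ∪
     {x | ∃ (s : S) (n : N),
        x = Finsupp.single (s • n) (1 : T) - Finsupp.single n (φ s)})

/-- The module obtained from the `S`-module `N` by induction (extension of
scalars) along `φ : S →+* T`; for group rings of a subgroup inclusion `C ≤ A`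
this is the induced module `N ⊗_{RC} RA`. -/
def Induced : Type v := (N →₀ T) ⧸ indRels φ N

noncomputable instance : AddCommGroup (Induced φ N) :=
  inferInstanceAs (AddCommGroup ((N →₀ T) ⧸ indRels φ N))

noncomputable instance : Module T (Induced φ N) :=
  inferInstanceAs (Module T ((N →₀ T) ⧸ indRels φ N))

/-- `indMk φ N n` is the element `n ⊗ 1` of the induced module. -/
noncomputable def indMk : N → Induced φ N := fun n => Submodule.Quotient.mk (Finsupp.single n 1)

variable {N} {N' : Type v} [AddCommMonoid N'] [Module S N']

/-- Functoriality of the induced module: the map `f ⊗ 1`. -/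
noncomputable def indMap (f : N →ₗ[S] N') : Induced φ N →ₗ[T] Induced φ N' :=
  Submodule.mapQ _ _ (Finsupp.lmapDomain T T f) <| by
    refine Submodule.span_le.2 ?_
    rintro x (⟨n, n', rfl⟩ | ⟨s, n, rfl⟩) <;>
      simp only [Submodule.mem_comap, map_sub, Finsupp.lmapDomain_apply,
        Finsupp.mapDomain_single, SetLike.mem_coe]
    · exact Submodule.subset_span (Or.inl ⟨f n, f n', by rw [map_add]⟩)
    · exact Submodule.subset_span (Or.inr ⟨s, f n, by rw [map_smul]⟩)

variable {M : Type v} [AddCommGroup M] [Module T M]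

/-- The universal property of the induced module: an additive map `f : N → M`
into a `T`-module satisfying `f (s • n) = φ s • f n` extends uniquely to a
`T`-linear map on the induced module. -/
noncomputable def indLift (f : N →+ M) (hf : ∀ (s : S) (n : N), f (s • n) = φ s • f n) :
    Induced φ N →ₗ[T] M :=
  Submodule.liftQ _ (Finsupp.lsum ℕ fun n => LinearMap.toSpanSingleton T M (f n)) <| by
    refine Submodule.span_le.2 ?_
    rintro x (⟨n, n', rfl⟩ | ⟨s, n, rfl⟩) <;>
      simp only [SetLike.mem_coe, LinearMap.mem_ker, map_sub, Finsupp.lsum_single,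
        LinearMap.toSpanSingleton_apply, one_smul]
    · rw [f.map_add]; abel
    · rw [hf]; abel

@[simp] lemma indLift_indMk (f : N →+ M) (hf : ∀ (s : S) (n : N), f (s • n) = φ s • f n)
    (n : N) : indLift φ f hf (indMk φ N n) = f n := by
  show ((indRels φ N).liftQ _ _) (Submodule.Quotient.mk _) = _
  erw [Submodule.liftQ_apply, Finsupp.lsum_single, LinearMap.toSpanSingleton_apply, one_smul]

end Induced

end GP
namespace GP

universe w'

/-- `G`, together with maps `jA, jB`, is the amalgamated free product
`A *_C B`, i.e. the pushout in the category of groups of `iA : C →* A` and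
`iB : C →* B`: the square commutes and the universal property holds. -/
def IsAmalgamatedProduct {C A B G : Type w'} [Group C] [Group A] [Group B] [Group G]
    (iA : C →* A) (iB : C →* B) (jA : A →* G) (jB : B →* G) : Prop :=
  jA.comp iA = jB.comp iB ∧
  ∀ {H : Type w'} [Group H] (kA : A →* H) (kB : B →* H),
    kA.comp iA = kB.comp iB → ∃! φ : G →* H, φ.comp jA = kA ∧ φ.comp jB = kB

end GP

/-!
The relations span the image of the `RG`-linear map
`δ : N ⊗_{RC} RG → (P ⊗_{RA} RG) × (Q ⊗_{RB} RG)`, `n ⊗ g ↦ (n ⊗ g, -(n ⊗ g))`, which is well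
defined because the two composites `C → A → G` and `C → B → G` agree. Applying `ρP ⊗ RG` to the
first component and identifying `(N ⊗_{RC} RA) ⊗_{RA} RG` with `N ⊗_{RC} RG` gives a left inverse
of `δ`. Hence the image of `δ` is a direct summand, and the quotient is a direct summand of
`(P ⊗_{RA} RG) × (Q ⊗_{RB} RG)`, which is projective since induction preserves projectivity.
-/

theorem Module.Projective.quotient_range_of_leftInverse {R K M : Type*} [Ring R]
    [AddCommGroup K] [Module R K] [AddCommGroup M] [Module R M] [Module.Projective R M]
    (δ : K →ₗ[R] M) (r : M →ₗ[R] K) (h : Function.LeftInverse r δ) :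
    Module.Projective R (M ⧸ LinearMap.range δ) := by
  refine .of_split ((LinearMap.range δ).liftQ (LinearMap.id - δ ∘ₗ r) ?_)
    (LinearMap.range δ).mkQ ?_
  · rintro _ ⟨k, rfl⟩
    simp [h k]
  · refine Submodule.linearMap_qext _ (LinearMap.ext fun x => ?_)
    simp

namespace GP

universe v

section Induced

variable {S T : Type v} [Ring S] [Ring T] (φ : S →+* T) (N : Type v) [AddCommMonoid N] [Module S N]

noncomputable def indMkQ : (N →₀ T) →ₗ[T] Induced φ N := (indRels φ N).mkQ

lemma indMkQ_single_one (n : N) : indMkQ φ N (Finsupp.single n 1) = indMk φ N n := rfl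

lemma indMkQ_single (n : N) (t : T) : indMkQ φ N (Finsupp.single n t) = t • indMk φ N n := by
  rw [← indMkQ_single_one, ← map_smul, Finsupp.smul_single, smul_eq_mul, mul_one]

lemma indMkQ_eq_zero {x : N →₀ T} (hx : x ∈ indRels φ N) : indMkQ φ N x = 0 :=
  (Submodule.Quotient.mk_eq_zero _).2 hx

lemma indMk_add (n n' : N) : indMk φ N (n + n') = indMk φ N n + indMk φ N n' := by
  have := indMkQ_eq_zero φ N (Submodule.subset_span (Or.inl ⟨n, n', rfl⟩))
  rwa [map_sub, map_sub, sub_sub, sub_eq_zero] at this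

lemma indMk_smul (s : S) (n : N) : indMk φ N (s • n) = φ s • indMk φ N n := by
  have := indMkQ_eq_zero φ N (Submodule.subset_span (Or.inr ⟨s, n, rfl⟩))
  rwa [map_sub, sub_eq_zero, indMkQ_single_one, indMkQ_single] at this

noncomputable def indMkHom : N →+ Induced φ N := AddMonoidHom.mk' (indMk φ N) (indMk_add φ N)

@[simp] lemma indMkHom_apply (n : N) : indMkHom φ N n = indMk φ N n := rfl

lemma span_range_indMk : Submodule.span T (Set.range (indMk φ N)) = ⊤ := by
  have : Set.range (indMk φ N) = indMkQ φ N '' Set.range (Finsupp.basisSingleOne (R := T)) := by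
    rw [← Set.range_comp]; rfl
  rw [this, Submodule.span_image, Module.Basis.span_eq, Submodule.map_top, LinearMap.range_eq_top]
  exact Submodule.mkQ_surjective _

variable {φ N} in
lemma Induced.linearMap_ext {M : Type v} [AddCommGroup M] [Module T M]
    {f g : Induced φ N →ₗ[T] M} (h : ∀ n, f (indMk φ N n) = g (indMk φ N n)) : f = g :=
  LinearMap.ext_on (span_range_indMk φ N) (by rintro _ ⟨n, rfl⟩; exact h n)

lemma indMkQ_mapRange (x : N →₀ S) :
    indMkQ φ N (Finsupp.mapRange φ (map_zero φ) x) =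
      indMk φ N (Finsupp.linearCombination S id x) := by
  induction x using Finsupp.induction_linear with
  | zero => simp [← indMkHom_apply]
  | add x y hx hy => rw [Finsupp.mapRange_add (map_add φ), map_add, hx, hy, map_add, indMk_add]
  | single n s => rw [Finsupp.mapRange_single, indMkQ_single, Finsupp.linearCombination_single,
      id, indMk_smul]

instance Induced.projective [Module.Projective S N] : Module.Projective T (Induced φ N) := by
  obtain ⟨s, hs⟩ := Module.projective_def.mp ‹Module.Projective S N›
  let f : N →+ (N →₀ T) := (Finsupp.mapRange.addMonoidHom φ.toAddMonoidHom).comp s.toAddMonoidHom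
  have hf (c : S) (n : N) : f (c • n) = φ c • f n := by
    ext; simp [f]
  refine .of_split (indLift φ f hf) (indMkQ φ N) (Induced.linearMap_ext fun n => ?_)
  simp [f, indMkQ_mapRange, hs n]

end Induced

section Composite

variable {S T U : Type v} [Ring S] [Ring T] [Ring U] {φ : S →+* T} {ψ : T →+* U} {χ : S →+* U}
  {N : Type v} [AddCommMonoid N] [Module S N]

lemma indMk_smul_of_comp_eq (hχ : ψ.comp φ = χ) (s : S) (n : N) :
    indMk χ N (s • n) = ψ (φ s) • indMk χ N n := by
  rw [indMk_smul, ← hχ, RingHom.comp_apply]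

noncomputable def indCompHom (hχ : ψ.comp φ = χ) : Induced φ N →+ Induced χ N :=
  letI := Module.compHom (Induced χ N) ψ
  (indLift φ (indMkHom χ N) (indMk_smul_of_comp_eq hχ)).toAddMonoidHom

lemma indCompHom_indMk (hχ : ψ.comp φ = χ) (n : N) :
    indCompHom hχ (indMk φ N n) = indMk χ N n :=
  letI := Module.compHom (Induced χ N) ψ
  indLift_indMk φ _ (indMk_smul_of_comp_eq hχ) n

lemma indCompHom_smul (hχ : ψ.comp φ = χ) (t : T) (x : Induced φ N) :
    indCompHom hχ (t • x) = ψ t • indCompHom hχ x :=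
  letI := Module.compHom (Induced χ N) ψ
  (indLift φ (indMkHom χ N) (indMk_smul_of_comp_eq hχ)).map_smul t x

variable {P : Type v} [AddCommMonoid P] [Module T P]

noncomputable def indCompMap (hχ : ψ.comp φ = χ) (ι : Induced φ N →ₗ[T] P) :
    Induced χ N →ₗ[U] Induced ψ P :=
  indLift χ ((indMkHom ψ P).comp (ι.toAddMonoidHom.comp (indMkHom φ N))) fun s n => by
    simp only [AddMonoidHom.coe_comp, Function.comp_apply, indMkHom_apply,
      LinearMap.toAddMonoidHom_coe]
    rw [indMk_smul, map_smul, indMk_smul, ← hχ, RingHom.comp_apply]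

lemma indCompMap_indMk (hχ : ψ.comp φ = χ) (ι : Induced φ N →ₗ[T] P) (n : N) :
    indCompMap hχ ι (indMk χ N n) = indMk ψ P (ι (indMk φ N n)) :=
  indLift_indMk χ _ _ n

noncomputable def indCompLift (hχ : ψ.comp φ = χ) (ρ : P →ₗ[T] Induced φ N) :
    Induced ψ P →ₗ[U] Induced χ N :=
  indLift ψ ((indCompHom hχ).comp ρ.toAddMonoidHom) fun t p => by
    simp [indCompHom_smul]

lemma indCompLift_indMk (hχ : ψ.comp φ = χ) (ρ : P →ₗ[T] Induced φ N) (p : P) :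
    indCompLift hχ ρ (indMk ψ P p) = indCompHom hχ (ρ p) :=
  indLift_indMk ψ _ _ p

lemma leftInverse_indCompLift_indCompMap (hχ : ψ.comp φ = χ) {ι : Induced φ N →ₗ[T] P}
    {ρ : P →ₗ[T] Induced φ N} (h : Function.LeftInverse ρ ι) :
    Function.LeftInverse (indCompLift hχ ρ) (indCompMap hχ ι) :=
  LinearMap.congr_fun (f := indCompLift hχ ρ ∘ₗ indCompMap hχ ι) (g := LinearMap.id) <|
    Induced.linearMap_ext fun n => by
      simp [indCompMap_indMk, indCompLift_indMk, h _, indCompHom_indMk]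

end Composite

section Antidiagonal

variable {S T₁ T₂ U : Type v} [Ring S] [Ring T₁] [Ring T₂] [Ring U]
  {φ₁ : S →+* T₁} {φ₂ : S →+* T₂} {ψ₁ : T₁ →+* U} {ψ₂ : T₂ →+* U} {χ : S →+* U}
  {N : Type v} [AddCommMonoid N] [Module S N]
  {P : Type v} [AddCommGroup P] [Module T₁ P] {Q : Type v} [AddCommGroup Q] [Module T₂ Q]

noncomputable def indAntidiag (h₁ : ψ₁.comp φ₁ = χ) (h₂ : ψ₂.comp φ₂ = χ)
    (ιP : Induced φ₁ N →ₗ[T₁] P) (ιQ : Induced φ₂ N →ₗ[T₂] Q) :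
    Induced χ N →ₗ[U] Induced ψ₁ P × Induced ψ₂ Q :=
  (indCompMap h₁ ιP).prod (-indCompMap h₂ ιQ)

lemma span_antidiag_eq_range (h₁ : ψ₁.comp φ₁ = χ) (h₂ : ψ₂.comp φ₂ = χ)
    (ιP : Induced φ₁ N →ₗ[T₁] P) (ιQ : Induced φ₂ N →ₗ[T₂] Q) :
    Submodule.span U {x | ∃ n : N,
      x = (indMk ψ₁ P (ιP (indMk φ₁ N n)), -indMk ψ₂ Q (ιQ (indMk φ₂ N n)))} =
      LinearMap.range (indAntidiag h₁ h₂ ιP ιQ) := by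
  rw [LinearMap.range_eq_map, ← span_range_indMk χ N, Submodule.map_span, ← Set.range_comp]
  congr 1
  ext x
  simp [indAntidiag, indCompMap_indMk, eq_comm]

theorem projective_quotient_span_antidiag [Module.Projective T₁ P] [Module.Projective T₂ Q]
    (h₁ : ψ₁.comp φ₁ = χ) (h₂ : ψ₂.comp φ₂ = χ) {ιP : Induced φ₁ N →ₗ[T₁] P}
    {ρP : P →ₗ[T₁] Induced φ₁ N} (hP : Function.LeftInverse ρP ιP)
    (ιQ : Induced φ₂ N →ₗ[T₂] Q) :
    Module.Projective U ((Induced ψ₁ P × Induced ψ₂ Q) ⧸ Submodule.span U {x | ∃ n : N,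
      x = (indMk ψ₁ P (ιP (indMk φ₁ N n)), -indMk ψ₂ Q (ιQ (indMk φ₂ N n)))}) := by
  rw [span_antidiag_eq_range h₁ h₂]
  exact .quotient_range_of_leftInverse _ (indCompLift h₁ ρP ∘ₗ LinearMap.fst U _ _)
    (leftInverse_indCompLift_indCompMap h₁ hP)

end Antidiagonal

end GP

open GP

theorem quotient_module_projective_general
    {R : Type u} [CommRing R]
    {C A B G₀ : Type u} [Group C] [Group A] [Group B] [Group G₀]
    (iA : C →* A) (iB : C →* B) (jA : A →* G₀) (jB : B →* G₀)
    (hpush : IsAmalgamatedProduct iA iB jA jB)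
    (P : Type u) [AddCommGroup P] [Module (MonoidAlgebra R A) P]
    (Q : Type u) [AddCommGroup Q] [Module (MonoidAlgebra R B) Q]
    (N : Type u) [AddCommGroup N] [Module (MonoidAlgebra R C) N]
    (hP : Module.Projective (MonoidAlgebra R A) P)
    (hQ : Module.Projective (MonoidAlgebra R B) Q)
    -- `N ⊗_{RC} RA` is a direct summand of `P`
    (ιP : Induced (MonoidAlgebra.mapDomainRingHom R iA) N →ₗ[MonoidAlgebra R A] P)
    (ρP : P →ₗ[MonoidAlgebra R A] Induced (MonoidAlgebra.mapDomainRingHom R iA) N)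
    (hP' : ρP.comp ιP = LinearMap.id)
    -- `N ⊗_{RC} RB` is a direct summand of `Q`
    (ιQ : Induced (MonoidAlgebra.mapDomainRingHom R iB) N →ₗ[MonoidAlgebra R B] Q) :
    Module.Projective (MonoidAlgebra R G₀)
      ((Induced (MonoidAlgebra.mapDomainRingHom R jA) P ×
        Induced (MonoidAlgebra.mapDomainRingHom R jB) Q) ⧸
        Submodule.span (MonoidAlgebra R G₀)
          {x | ∃ n : N,
            x = (indMk (MonoidAlgebra.mapDomainRingHom R jA) P
                   (ιP (indMk (MonoidAlgebra.mapDomainRingHom R iA) N n)),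
                 - indMk (MonoidAlgebra.mapDomainRingHom R jB) Q
                   (ιQ (indMk (MonoidAlgebra.mapDomainRingHom R iB) N n)))}) := by
  have hA : (MonoidAlgebra.mapDomainRingHom R jA).comp (MonoidAlgebra.mapDomainRingHom R iA) =
      MonoidAlgebra.mapDomainRingHom R (jA.comp iA) :=
    (MonoidAlgebra.mapDomainRingHom_comp jA iA).symm
  have hB : (MonoidAlgebra.mapDomainRingHom R jB).comp (MonoidAlgebra.mapDomainRingHom R iB) =
      MonoidAlgebra.mapDomainRingHom R (jA.comp iA) := by
    rw [hpush.1, MonoidAlgebra.mapDomainRingHom_comp]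
  exact projective_quotient_span_antidiag hA hB (LinearMap.congr_fun hP') ιQ

theorem quotient_module_projective
    {R : Type u} [CommRing R]
    {C A B G₀ : Type u} [Group C] [Group A] [Group B] [Group G₀]
    (iA : C →* A) (iB : C →* B) (jA : A →* G₀) (jB : B →* G₀)
    (hiA : Function.Injective iA) (hiB : Function.Injective iB)
    (hpush : IsAmalgamatedProduct iA iB jA jB)
    (P : Type u) [AddCommGroup P] [Module (MonoidAlgebra R A) P]
    (Q : Type u) [AddCommGroup Q] [Module (MonoidAlgebra R B) Q]
    (N : Type u) [AddCommGroup N] [Module (MonoidAlgebra R C) N]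
    (hP : Module.Projective (MonoidAlgebra R A) P)
    (hQ : Module.Projective (MonoidAlgebra R B) Q)
    (hN : Module.Projective (MonoidAlgebra R C) N)
    -- `N ⊗_{RC} RA` is a direct summand of `P`
    (ιP : Induced (MonoidAlgebra.mapDomainRingHom R iA) N →ₗ[MonoidAlgebra R A] P)
    (ρP : P →ₗ[MonoidAlgebra R A] Induced (MonoidAlgebra.mapDomainRingHom R iA) N)
    (hP' : ρP.comp ιP = LinearMap.id)
    -- `N ⊗_{RC} RB` is a direct summand of `Q`
    (ιQ : Induced (MonoidAlgebra.mapDomainRingHom R iB) N →ₗ[MonoidAlgebra R B] Q)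
    (ρQ : Q →ₗ[MonoidAlgebra R B] Induced (MonoidAlgebra.mapDomainRingHom R iB) N)
    (hQ' : ρQ.comp ιQ = LinearMap.id) :
    Module.Projective (MonoidAlgebra R G₀)
      ((Induced (MonoidAlgebra.mapDomainRingHom R jA) P ×
        Induced (MonoidAlgebra.mapDomainRingHom R jB) Q) ⧸
        Submodule.span (MonoidAlgebra R G₀)
          {x | ∃ n : N,
            x = (indMk (MonoidAlgebra.mapDomainRingHom R jA) P
                   (ιP (indMk (MonoidAlgebra.mapDomainRingHom R iA) N n)),
                 - indMk (MonoidAlgebra.mapDomainRingHom R jB) Q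
                   (ιQ (indMk (MonoidAlgebra.mapDomainRingHom R iB) N n)))}) :=
  quotient_module_projective_general iA iB jA jB hpush P Q N hP hQ ιP ρP hP' ιQ
end

section
/- Let Γ be a finite simplicial graph with a group G_v assigned to each vertex v. Fix a vertex v, let Δ be the full subgraph of Γ on all vertices except v, and let Ω be the full subgraph on v and all vertices adjacent to v. Then G(Γ) is isomorphic to the amalgamated free product (G_v × G(Ω ∩ Δ)) *_{G(Ω ∩ Δ)} G(Δ); that is, G(Γ) is the pushout in the category of groups of the natural inclusions G(Ω ∩ Δ) → G_v × G(Ω ∩ Δ) and G(Ω ∩ Δ) → G(Δ). -/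
/-!
Shared infrastructure.  Following standard practice in Mathlib (e.g. `Rep R G`),
we work with *left* modules over the group ring `MonoidAlgebra R G`; for group
rings the categories of left and right modules are equivalent, so this is the
usual formalization of the paper's "right `RA`-modules".
-/

universe u

namespace GP

universe w

open Monoid

section GraphProduct

variable {V : Type w} (Γ : SimpleGraph V) (G : V → Type w) [∀ v, Group (G v)]

/-- The relations of a graph product: the normal closure, inside the free
product of the vertex groups, of the commutators `g⁻¹h⁻¹gh` for `g ∈ G v`,
`h ∈ G w` and `v, w` adjacent. -/
def graphRels : Subgroup (CoprodI G) :=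
  Subgroup.normalClosure
    {x | ∃ (v w : V) (_ : Γ.Adj v w) (g : G v) (h : G w),
      x = (CoprodI.of g)⁻¹ * (CoprodI.of h)⁻¹ * CoprodI.of g * CoprodI.of h}

instance : (graphRels Γ G).Normal := Subgroup.normalClosure_normal

/-- The graph product of the groups `G v` along the (simplicial) graph `Γ`:
the quotient of the free product of the `G v` by the normal closure of the
commutators of elements of adjacent vertex groups. -/
def GraphProduct : Type w := CoprodI G ⧸ graphRels Γ G

instance : Group (GraphProduct Γ G) :=
  inferInstanceAs (Group (CoprodI G ⧸ graphRels Γ G))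

/-- The canonical homomorphism from a vertex group to the graph product. -/
def GraphProduct.of {v : V} : G v →* GraphProduct Γ G :=
  (QuotientGroup.mk' (graphRels Γ G)).comp CoprodI.of

lemma GraphProduct.of_commute {v w : V} (h : Γ.Adj v w) (g : G v) (k : G w) :
    Commute (GraphProduct.of Γ G g) (GraphProduct.of Γ G k) := by
  have hmem : ((CoprodI.of g)⁻¹ * (CoprodI.of k)⁻¹ * CoprodI.of g * CoprodI.of k :
      CoprodI G) ∈ graphRels Γ G :=
    Subgroup.subset_normalClosure ⟨v, w, h, g, k, rfl⟩
  have h1 : ((GraphProduct.of Γ G g)⁻¹ * (GraphProduct.of Γ G k)⁻¹ *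
      GraphProduct.of Γ G g * GraphProduct.of Γ G k : GraphProduct Γ G) = 1 := by
    have := (QuotientGroup.eq_one_iff _).2 hmem
    exact this
  have := mul_eq_one_iff_eq_inv.1 h1
  rw [Commute, SemiconjBy]
  calc GraphProduct.of Γ G g * GraphProduct.of Γ G k
      = (GraphProduct.of Γ G k) * ((GraphProduct.of Γ G k)⁻¹ *
          (GraphProduct.of Γ G g) * (GraphProduct.of Γ G k)) := by group
    _ = (GraphProduct.of Γ G k) * (GraphProduct.of Γ G g) := by
        congr 1
        have : (GraphProduct.of Γ G g)⁻¹ * (GraphProduct.of Γ G k)⁻¹ *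
            GraphProduct.of Γ G g * GraphProduct.of Γ G k = 1 := h1
        group at this ⊢
        -- from h1 : g⁻¹ k⁻¹ g k = 1 we get k⁻¹ g k = g
        have h2 : (GraphProduct.of Γ G k)⁻¹ * GraphProduct.of Γ G g *
            GraphProduct.of Γ G k = GraphProduct.of Γ G g := by
          have := congrArg (fun x => GraphProduct.of Γ G g * x) h1
          simpa [mul_assoc] using this
        group at h2 ⊢
        simpa using h2
  
/-- A complete subgraph (clique) of `Γ`, as a finite set of pairwise adjacent
vertices. -/
def IsCompleteSubgraph (K : Finset V) : Prop :=
  ∀ ⦃v⦄, v ∈ K → ∀ ⦃w⦄, w ∈ K → v ≠ w → Γ.Adj v w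

end GraphProduct

end GP
/-!
`G(Γ)` is generated by `G v₀` and `G(Δ)`, which gives uniqueness. For existence, a pair
`kA : G v₀ × G(Ω ∩ Δ) →* H`, `kB : G(Δ) →* H` agreeing on `G(Ω ∩ Δ)` yields the
vertex homomorphisms `kA` on `G v₀` and `kB` on every other vertex group. They commute along
every edge: along an edge through `v₀` because there `kB` agrees with `kA` on the factor
`G(Ω ∩ Δ)`, which commutes with the factor `G v₀`. So they induce a homomorphism out of
`G(Γ)`.
-/

namespace GP

open Monoid

universe w v'

namespace GraphProduct

section UniversalProperty

variable {V : Type w} {Γ : SimpleGraph V} {G : V → Type w} [∀ v, Group (G v)]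
  {H : Type v'} [Group H]

def lift (f : ∀ v, G v →* H)
    (hf : ∀ ⦃v w⦄, Γ.Adj v w → ∀ (g : G v) (k : G w), Commute (f v g) (f w k)) :
    GraphProduct Γ G →* H :=
  QuotientGroup.lift _ (CoprodI.lift f) <| Subgroup.normalClosure_le_normal <| by
    rintro _ ⟨v, w, hvw, g, k, rfl⟩
    simp only [SetLike.mem_coe, MonoidHom.mem_ker, map_mul, map_inv, CoprodI.lift_of,
      mul_assoc, (hf hvw g k).eq, inv_mul_cancel_left, inv_mul_cancel]

@[simp]
theorem lift_of (f : ∀ v, G v →* H)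
    (hf : ∀ ⦃v w⦄, Γ.Adj v w → ∀ (g : G v) (k : G w), Commute (f v g) (f w k))
    {v : V} (g : G v) : lift f hf (of Γ G g) = f v g :=
  CoprodI.lift_of f g

@[ext]
theorem hom_ext {φ ψ : GraphProduct Γ G →* H}
    (h : ∀ v (g : G v), φ (of Γ G g) = ψ (of Γ G g)) : φ = ψ :=
  QuotientGroup.monoidHom_ext _ <| CoprodI.ext_hom _ _ fun v => MonoidHom.ext (h v)

@[elab_as_elim]
theorem induction_on {C : GraphProduct Γ G → Prop} (x : GraphProduct Γ G) (one : C 1)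
    (of : ∀ v (g : G v), C (of Γ G g)) (mul : ∀ x y, C x → C y → C (x * y)) : C x := by
  obtain ⟨y, rfl⟩ := QuotientGroup.mk'_surjective _ x
  induction y using CoprodI.induction_on with
  | one => exact one
  | of v g => exact of v g
  | mul a b ha hb => exact mul _ _ ha hb

end UniversalProperty

section Map

variable {V W : Type w} {Λ : SimpleGraph V} {Γ : SimpleGraph W} {G : W → Type w}
  [∀ w, Group (G w)]

def map (f : Λ →g Γ) (G : W → Type w) [∀ w, Group (G w)] :
    GraphProduct Λ (fun v => G (f v)) →* GraphProduct Γ G :=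
  lift (fun v => of Γ G (v := f v)) fun _ _ h g k => of_commute Γ G (f.map_adj h) g k

@[simp]
theorem map_of (f : Λ →g Γ) {v : V} (g : G (f v)) : map f G (of Λ _ g) = of Γ G g :=
  lift_of (Γ := Λ) (fun v => of Γ G (v := f v)) _ g

theorem commute_of_map {f : Λ →g Γ} {w : W} (hf : ∀ v, Γ.Adj w (f v)) (g : G w)
    (x : GraphProduct Λ (fun v => G (f v))) : Commute (of Γ G g) (map f G x) := by
  induction x using induction_on with
  | one => simp
  | of v k => simpa using of_commute Γ G (hf v) g k
  | mul x y hx hy => simpa using hx.mul_right hy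

end Map

end GraphProduct

open GraphProduct

section Decomposition

variable {V : Type w} (Γ : SimpleGraph V) (G : V → Type w) [∀ v, Group (G v)] (v₀ : V)

/-- `G(Ω ∩ Δ)`. -/
abbrev LinkProduct : Type w := GraphProduct (Γ.induce (Γ.neighborSet v₀)) (fun w => G w.1)

/-- `G(Δ)`. -/
abbrev DeletionProduct : Type w := GraphProduct (Γ.induce {w : V | w ≠ v₀}) (fun w => G w.1)

theorem neighborSet_subset_ne : Γ.neighborSet v₀ ⊆ {w : V | w ≠ v₀} :=
  fun _ hw => (Γ.ne_of_adj hw).symm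

def linkToDeletion : LinkProduct Γ G v₀ →* DeletionProduct Γ G v₀ :=
  map (Γ.induceHomOfLE (neighborSet_subset_ne Γ v₀)).toHom fun w => G w.1

def deletionHom : DeletionProduct Γ G v₀ →* GraphProduct Γ G :=
  map (SimpleGraph.Embedding.induce _).toHom G

def linkHom : LinkProduct Γ G v₀ →* GraphProduct Γ G :=
  map (SimpleGraph.Embedding.induce _).toHom G

def starHom : G v₀ × LinkProduct Γ G v₀ →* GraphProduct Γ G :=
  (of Γ G).noncommCoprod (linkHom Γ G v₀)
    (commute_of_map (f := (SimpleGraph.Embedding.induce _).toHom) fun w => w.2)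

variable {Γ G v₀}

@[simp]
theorem linkToDeletion_of (w : Γ.neighborSet v₀) (g : G w.1) :
    linkToDeletion Γ G v₀ (of _ _ (v := w) g)
      = of (Γ.induce {w : V | w ≠ v₀}) (fun w => G w.1)
          (v := ⟨w.1, neighborSet_subset_ne Γ v₀ w.2⟩) g :=
  map_of (G := fun w : {w : V | w ≠ v₀} => G w.1)
    (Γ.induceHomOfLE (neighborSet_subset_ne Γ v₀)).toHom g

@[simp]
theorem linkHom_of (w : Γ.neighborSet v₀) (g : G w.1) :
    linkHom Γ G v₀ (of _ _ (v := w) g) = of Γ G g :=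
  map_of (SimpleGraph.Embedding.induce _).toHom g

@[simp]
theorem deletionHom_of (w : {w : V | w ≠ v₀}) (g : G w.1) :
    deletionHom Γ G v₀ (of _ _ (v := w) g) = of Γ G g :=
  map_of (SimpleGraph.Embedding.induce _).toHom g

theorem starHom_apply (g : G v₀) (x : LinkProduct Γ G v₀) :
    starHom Γ G v₀ (g, x) = of Γ G g * linkHom Γ G v₀ x :=
  rfl

@[simp]
theorem starHom_inl (g : G v₀) : starHom Γ G v₀ (g, 1) = of Γ G g := by
  simp [starHom_apply]

@[simp]
theorem starHom_inr_of (w : Γ.neighborSet v₀) (g : G w.1) :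
    starHom Γ G v₀ (1, of _ _ (v := w) g) = of Γ G g := by
  simp [starHom_apply]

theorem starHom_comp_eq_deletionHom_comp :
    (starHom Γ G v₀).comp ((1 : LinkProduct Γ G v₀ →* G v₀).prod (MonoidHom.id _))
      = (deletionHom Γ G v₀).comp (linkToDeletion Γ G v₀) := by
  ext w g
  simp

theorem hom_ext_of_starHom_of_deletionHom {H : Type v'} [Group H] {φ ψ : GraphProduct Γ G →* H}
    (hA : φ.comp (starHom Γ G v₀) = ψ.comp (starHom Γ G v₀))
    (hB : φ.comp (deletionHom Γ G v₀) = ψ.comp (deletionHom Γ G v₀)) : φ = ψ := by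
  ext v g
  by_cases hv : v = v₀
  · subst hv
    simpa using DFunLike.congr_fun hA (g, 1)
  · simpa using DFunLike.congr_fun hB (of _ _ (v := ⟨v, hv⟩) g)

section PushoutLift

variable [DecidableEq V] {H : Type v'} [Group H]

def vertexFamily (a : G v₀ →* H) (b : DeletionProduct Γ G v₀ →* H) (v : V) : G v →* H :=
  if h : v = v₀ then h ▸ a
  else b.comp (of (Γ.induce {w : V | w ≠ v₀}) (fun w => G w.1) (v := ⟨v, h⟩))

@[simp]
theorem vertexFamily_self (a : G v₀ →* H) (b : DeletionProduct Γ G v₀ →* H) :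
    vertexFamily a b v₀ = a := by
  rw [vertexFamily, dif_pos rfl]

theorem vertexFamily_of_ne (a : G v₀ →* H) (b : DeletionProduct Γ G v₀ →* H) {v : V}
    (h : v ≠ v₀) :
    vertexFamily a b v
      = b.comp (of (Γ.induce {w : V | w ≠ v₀}) (fun w => G w.1) (v := ⟨v, h⟩)) := by
  rw [vertexFamily, dif_neg h]

variable {kA : G v₀ × LinkProduct Γ G v₀ →* H} {kB : DeletionProduct Γ G v₀ →* H}

theorem vertexFamily_of_adj
    (hk : kA.comp ((1 : LinkProduct Γ G v₀ →* G v₀).prod (MonoidHom.id _))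
      = kB.comp (linkToDeletion Γ G v₀))
    {w : V} (hw : Γ.Adj v₀ w) (g : G w) :
    vertexFamily (kA.comp (.inl _ _)) kB w g = kA (1, of _ _ (v := ⟨w, hw⟩) g) := by
  simpa [vertexFamily_of_ne _ _ (Γ.ne_of_adj hw).symm] using
    (DFunLike.congr_fun hk (of _ _ (v := ⟨w, hw⟩) g)).symm

theorem commute_vertexFamily
    (hk : kA.comp ((1 : LinkProduct Γ G v₀ →* G v₀).prod (MonoidHom.id _))
      = kB.comp (linkToDeletion Γ G v₀))
    ⦃a b : V⦄ (hab : Γ.Adj a b) (g : G a) (k : G b) :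
    Commute (vertexFamily (kA.comp (.inl _ _)) kB a g)
      (vertexFamily (kA.comp (.inl _ _)) kB b k) := by
  obtain rfl | ha := eq_or_ne a v₀
  · rw [vertexFamily_of_adj hk hab, vertexFamily_self]
    exact (MonoidHom.commute_inl_inr _ _).map kA
  obtain rfl | hb := eq_or_ne b v₀
  · rw [vertexFamily_of_adj hk hab.symm, vertexFamily_self]
    exact ((MonoidHom.commute_inl_inr _ _).map kA).symm
  rw [vertexFamily_of_ne _ _ ha, vertexFamily_of_ne _ _ hb]
  have hab' : (Γ.induce {w | w ≠ v₀}).Adj ⟨a, ha⟩ ⟨b, hb⟩ := hab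
  exact (of_commute _ _ hab' g k).map kB

variable (hk : kA.comp ((1 : LinkProduct Γ G v₀ →* G v₀).prod (MonoidHom.id _))
  = kB.comp (linkToDeletion Γ G v₀))

def pushoutLift : GraphProduct Γ G →* H :=
  lift (vertexFamily (kA.comp (.inl _ _)) kB) (commute_vertexFamily hk)

theorem pushoutLift_comp_starHom : (pushoutLift hk).comp (starHom Γ G v₀) = kA := by
  have hlink : (pushoutLift hk).comp (linkHom Γ G v₀) = kA.comp (.inr _ _) := by
    ext w g
    simp [pushoutLift, vertexFamily_of_adj hk w.2]
  ext ⟨g, x⟩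
  rw [MonoidHom.comp_apply, starHom_apply, map_mul, ← MonoidHom.comp_apply _ (linkHom Γ G v₀),
    hlink]
  simp [pushoutLift, ← map_mul]

theorem pushoutLift_comp_deletionHom : (pushoutLift hk).comp (deletionHom Γ G v₀) = kB := by
  ext w g
  simp [pushoutLift, vertexFamily_of_ne _ _ w.2]

end PushoutLift

theorem isAmalgamatedProduct_starHom_deletionHom :
    IsAmalgamatedProduct ((1 : LinkProduct Γ G v₀ →* G v₀).prod (MonoidHom.id _))
      (linkToDeletion Γ G v₀) (starHom Γ G v₀) (deletionHom Γ G v₀) := by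
  classical
  refine ⟨starHom_comp_eq_deletionHom_comp, fun kA kB hk => ?_⟩
  refine ⟨pushoutLift hk, ⟨pushoutLift_comp_starHom hk, pushoutLift_comp_deletionHom hk⟩,
    fun ψ ⟨hψA, hψB⟩ => ?_⟩
  exact hom_ext_of_starHom_of_deletionHom (hψA.trans (pushoutLift_comp_starHom hk).symm)
    (hψB.trans (pushoutLift_comp_deletionHom hk).symm)

end Decomposition

end GP

open GP

theorem graphProduct_decomposition_general {V : Type u}
    (Γ : SimpleGraph V) (G : V → Type u) [∀ v, Group (G v)] (v₀ : V) :
    ∃ (ι : GraphProduct (Γ.induce (Γ.neighborSet v₀)) (fun w => G w.1) →*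
           GraphProduct (Γ.induce {w : V | w ≠ v₀}) (fun w => G w.1))
      (jA : (G v₀ × GraphProduct (Γ.induce (Γ.neighborSet v₀)) (fun w => G w.1)) →*
            GraphProduct Γ G)
      (jB : GraphProduct (Γ.induce {w : V | w ≠ v₀}) (fun w => G w.1) →*
            GraphProduct Γ G),
      -- `ι` is induced by the inclusions of the vertex groups
      (∀ (w : Γ.neighborSet v₀) (g : G w.1),
        ι (GraphProduct.of _ _ (v := w) g)
          = GraphProduct.of (Γ.induce {w : V | w ≠ v₀}) (fun w => G w.1)
              (v := ⟨w.1, (Γ.ne_of_adj w.2).symm⟩) g) ∧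
      -- `jA` restricted to `G v₀` and to `G(Ω ∩ Δ)` is induced by the vertex inclusions
      (∀ g : G v₀, jA (g, 1) = GraphProduct.of Γ G g) ∧
      (∀ (w : Γ.neighborSet v₀) (g : G w.1),
        jA (1, GraphProduct.of _ _ (v := w) g) = GraphProduct.of Γ G g) ∧
      -- `jB` is induced by the vertex inclusions
      (∀ (w : {w : V | w ≠ v₀}) (g : G w.1),
        jB (GraphProduct.of _ _ (v := w) g) = GraphProduct.of Γ G g) ∧
      -- `G(Γ)` is the pushout of `x ↦ (1, x)` and `ι`
      IsAmalgamatedProduct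
        ((1 : GraphProduct (Γ.induce (Γ.neighborSet v₀)) (fun w => G w.1) →* G v₀).prod
          (MonoidHom.id _))
        ι jA jB := by
  exact ⟨linkToDeletion Γ G v₀, starHom Γ G v₀, deletionHom Γ G v₀, linkToDeletion_of,
    starHom_inl, starHom_inr_of, deletionHom_of, isAmalgamatedProduct_starHom_deletionHom⟩

theorem graphProduct_decomposition {V : Type u} [Fintype V]
    (Γ : SimpleGraph V) (G : V → Type u) [∀ v, Group (G v)] (v₀ : V) :
    ∃ (ι : GraphProduct (Γ.induce (Γ.neighborSet v₀)) (fun w => G w.1) →*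
           GraphProduct (Γ.induce {w : V | w ≠ v₀}) (fun w => G w.1))
      (jA : (G v₀ × GraphProduct (Γ.induce (Γ.neighborSet v₀)) (fun w => G w.1)) →*
            GraphProduct Γ G)
      (jB : GraphProduct (Γ.induce {w : V | w ≠ v₀}) (fun w => G w.1) →*
            GraphProduct Γ G),
      -- `ι` is induced by the inclusions of the vertex groups
      (∀ (w : Γ.neighborSet v₀) (g : G w.1),
        ι (GraphProduct.of _ _ (v := w) g)
          = GraphProduct.of (Γ.induce {w : V | w ≠ v₀}) (fun w => G w.1)
              (v := ⟨w.1, (Γ.ne_of_adj w.2).symm⟩) g) ∧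
      -- `jA` restricted to `G v₀` and to `G(Ω ∩ Δ)` is induced by the vertex inclusions
      (∀ g : G v₀, jA (g, 1) = GraphProduct.of Γ G g) ∧
      (∀ (w : Γ.neighborSet v₀) (g : G w.1),
        jA (1, GraphProduct.of _ _ (v := w) g) = GraphProduct.of Γ G g) ∧
      -- `jB` is induced by the vertex inclusions
      (∀ (w : {w : V | w ≠ v₀}) (g : G w.1),
        jB (GraphProduct.of _ _ (v := w) g) = GraphProduct.of Γ G g) ∧
      -- `G(Γ)` is the pushout of `x ↦ (1, x)` and `ι`
      IsAmalgamatedProduct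
        ((1 : GraphProduct (Γ.induce (Γ.neighborSet v₀)) (fun w => G w.1) →* G v₀).prod
          (MonoidHom.id _))
        ι jA jB :=
  graphProduct_decomposition_general Γ G v₀
end
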